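/- Let A be a monoid, let z be a unit of A, and let X be a subset of A. Then γ(X) = γ(X + z) = γ(z + X), where X + z := {x + z : x ∈ X} and z + X := {z + x : x ∈ X}. -/
import Mathlib


open Pointwise

/-- The order of `z`: the cardinality (in `ℕ∞`) of the subsemigroup
`{z, z+z, z+z+z, …}` generated by `z`. -/
noncomputable def ord {A : Type*} [AddSemigroup A] (z : A) : ℕ∞ :=
  ((AddSubsemigroup.closure {z} : AddSubsemigroup A) : Set A).encard

/-- The Cauchy–Davenport constant of a subset `X` of a monoid:
`γ(X) = sup_{x₀ ∈ X^×} inf_{x ∈ X, x ≠ x₀} ord (x + (-x₀))`. -/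
noncomputable def gamma {A : Type*} [AddMonoid A] (X : Set A) : ℕ∞ :=
  ⨆ (u : AddUnits A) (_ : (u : A) ∈ X),
    ⨅ (x : A) (_ : x ∈ X ∧ x ≠ (u : A)), ord (x + ((-u : AddUnits A) : A))

lemma ord_addHom {A B : Type*} [AddSemigroup A] [AddSemigroup B] (f : AddHom A B)
    (hf : Function.Injective f) (w : A) : ord (f w) = ord w := by
  have h : ((AddSubsemigroup.closure {f w} : AddSubsemigroup B) : Set B)
      = f '' ((AddSubsemigroup.closure {w} : AddSubsemigroup A) : Set A) := by
    rw [← Set.image_singleton, ← AddHom.map_mclosure]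
    rfl
  rw [ord, ord, h, Set.InjOn.encard_image (hf.injOn)]

lemma ord_conj {A : Type*} [AddMonoid A] (a : AddUnits A) (w : A) :
    ord ((a : A) + w + ((-a : AddUnits A) : A)) = ord w := by
  have hadd : ∀ x y : A, (a : A) + (x + y) + ((-a : AddUnits A) : A)
      = ((a : A) + x + ((-a : AddUnits A) : A)) + ((a : A) + y + ((-a : AddUnits A) : A)) := by
    intro x y
    simp [add_assoc, AddUnits.neg_add_cancel_left]
  let f : AddHom A A := ⟨fun x => (a : A) + x + ((-a : AddUnits A) : A), fun x y => hadd x y⟩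
  have hf : Function.Injective f := by
    intro x y hxy
    have h2 : ((-a : AddUnits A) : A) + ((a : A) + x + ((-a : AddUnits A) : A)) + (a : A)
        = ((-a : AddUnits A) : A) + ((a : A) + y + ((-a : AddUnits A) : A)) + (a : A) := by
      simpa [f] using congrArg (fun t => ((-a : AddUnits A) : A) + t + (a : A)) hxy
    simpa [add_assoc, AddUnits.neg_add_cancel_left, AddUnits.add_neg_cancel_right,
      AddUnits.neg_add_cancel_right, AddUnits.add_neg_cancel_left] using h2
  exact ord_addHom f hf w

theorem stmt3 {A : Type*} [AddMonoid A] (z : A) (hz : IsAddUnit z) (X : Set A) :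
    gamma X = gamma (X + {z}) ∧ gamma X = gamma ({z} + X) := by
  obtain ⟨ζ, rfl⟩ := hz
  have hXr : ∀ y : A, y ∈ X + ({(ζ : A)} : Set A) ↔ ∃ x ∈ X, x + (ζ : A) = y := by
    intro y; simp [Set.mem_add]
  have hXl : ∀ y : A, y ∈ ({(ζ : A)} : Set A) + X ↔ ∃ x ∈ X, (ζ : A) + x = y := by
    intro y; simp [Set.mem_add]
  have cancelR : ∀ x y : A, x + (ζ : A) = y + (ζ : A) → x = y := by
    intro x y h
    have := congrArg (fun t => t + ((-ζ : AddUnits A) : A)) h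
    simpa [add_assoc, AddUnits.add_neg_cancel_left] using this
  have cancelL : ∀ x y : A, (ζ : A) + x = (ζ : A) + y → x = y := by
    intro x y h
    have := congrArg (fun t => ((-ζ : AddUnits A) : A) + t) h
    simpa [← add_assoc, AddUnits.neg_add_cancel_left] using this
  constructor
  · -- right translate
    refine Equiv.iSup_congr (Equiv.addRight ζ) fun u => ?_
    simp only [Equiv.coe_addRight]
    have hmem : ((u + ζ : AddUnits A) : A) ∈ X + ({(ζ : A)} : Set A) ↔ (u : A) ∈ X := by
      rw [hXr]
      constructor
      · rintro ⟨x, hx, hxe⟩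
        have hx' : x = (u : A) := cancelR _ _ (by simpa [AddUnits.val_add] using hxe)
        exact hx' ▸ hx
      · intro hu
        exact ⟨(u : A), hu, rfl⟩
    refine iSup_congr_Prop hmem fun _ => ?_
    refine (Equiv.iInf_congr (AddUnits.addRight ζ) fun x => ?_).symm
    simp only [AddUnits.addRight_apply]
    have hP : (x + (ζ : A) ∈ X + ({(ζ : A)} : Set A) ∧ x + (ζ : A) ≠ ((u + ζ : AddUnits A) : A))
        ↔ (x ∈ X ∧ x ≠ (u : A)) := by
      constructor
      · rintro ⟨h1, h2⟩
        obtain ⟨x', hx', hxe⟩ := (hXr _).1 h1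
        have hxx : x' = x := cancelR _ _ hxe
        refine ⟨hxx ▸ hx', fun hxu => h2 ?_⟩
        rw [hxu]; rfl
      · rintro ⟨h1, h2⟩
        refine ⟨(hXr _).2 ⟨x, h1, rfl⟩, fun he => h2 ?_⟩
        exact cancelR _ _ (by simpa [AddUnits.val_add] using he)
    refine iInf_congr_Prop hP fun _ => ?_
    have key : x + (ζ : A) + ((-(u + ζ) : AddUnits A) : A) = x + ((-u : AddUnits A) : A) := by
      simp [neg_add_rev, AddUnits.val_add, add_assoc, AddUnits.add_neg_cancel_left]
    rw [key]
  · -- left translate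
    refine Equiv.iSup_congr (Equiv.addLeft ζ) fun u => ?_
    simp only [Equiv.coe_addLeft]
    have hmem : ((ζ + u : AddUnits A) : A) ∈ ({(ζ : A)} : Set A) + X ↔ (u : A) ∈ X := by
      rw [hXl]
      constructor
      · rintro ⟨x, hx, hxe⟩
        have hx' : x = (u : A) := cancelL _ _ (by simpa [AddUnits.val_add] using hxe)
        exact hx' ▸ hx
      · intro hu
        exact ⟨(u : A), hu, rfl⟩
    refine iSup_congr_Prop hmem fun _ => ?_
    refine (Equiv.iInf_congr (AddUnits.addLeft ζ) fun x => ?_).symm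
    simp only [AddUnits.addLeft_apply]
    have hP : ((ζ : A) + x ∈ ({(ζ : A)} : Set A) + X ∧ (ζ : A) + x ≠ ((ζ + u : AddUnits A) : A))
        ↔ (x ∈ X ∧ x ≠ (u : A)) := by
      constructor
      · rintro ⟨h1, h2⟩
        obtain ⟨x', hx', hxe⟩ := (hXl _).1 h1
        have hxx : x' = x := cancelL _ _ hxe
        refine ⟨hxx ▸ hx', fun hxu => h2 ?_⟩
        rw [hxu]; rfl
      · rintro ⟨h1, h2⟩
        refine ⟨(hXl _).2 ⟨x, h1, rfl⟩, fun he => h2 ?_⟩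
        exact cancelL _ _ (by simpa [AddUnits.val_add] using he)
    refine iInf_congr_Prop hP fun _ => ?_
    have key : (ζ : A) + x + ((-(ζ + u) : AddUnits A) : A)
        = (ζ : A) + (x + ((-u : AddUnits A) : A)) + ((-ζ : AddUnits A) : A) := by
      simp [neg_add_rev, AddUnits.val_add, add_assoc]
    rw [key, ord_conj]
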